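/- arXiv:2011.06941 — 2 statements merged into one kernel-verified Lean document; each statement's English description precedes it below -/
import Mathlib

section
/- Let Λ ⊆ ℝ^d be a lattice, N ≥ 1, p₁,…,p_N ∈ (0,∞], and define R_N(p₁,…,p_N) = (Σ_{j=1}^N max(1, 1/p_j)) − min_{1≤j≤N} max(1, 1/p_j). Suppose p₀ ∈ (0,∞] satisfies 1/p₀ ≤ Σ_{j=1}^N 1/p_j − R_N(p₁,…,p_N). Then the N-fold convolution map (a₁,…,a_N) ↦ a₁*⋯*a_N on finitely supported sequences extends uniquely to a continuous map ℓ^{p₁}(Λ) × ⋯ × ℓ^{p_N}(Λ) → ℓ^{p₀}(Λ), and ‖a₁*⋯*a_N‖_{ℓ^{p₀}} ≤ ∏_j ‖a_j‖_{ℓ^{p_j}}. -/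
open scoped BigOperators ENNReal

/-- The (quasi-)norm of `ℓ^p(Λ)` for `p ∈ (0,∞]`. -/
noncomputable def lqnorm {α : Type*} (p : ℝ≥0∞) (f : α → ℂ) : ℝ :=
  if p = ∞ then ⨆ j, ‖f j‖ else (∑' j, ‖f j‖ ^ p.toReal) ^ (1 / p.toReal)

/-- `N+1`-fold convolution of sequences on a discrete additive group. -/
noncomputable def nconv {G : Type*} [AddCommGroup G] :
    (N : ℕ) → (Fin (N + 1) → (G → ℂ)) → (G → ℂ)
  | 0, a => a 0
  | (N + 1), a => fun k => ∑' j, a 0 j * nconv N (fun i => a i.succ) (k - j)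

/-!
The `N`-fold inequality is reduced to two factors by induction: `a_1 * ⋯ * a_N` lies in `ℓ^ρ` with
`1/ρ = ∑_{j ≥ 1} 1/p_j - R_N(p_1, …, p_N)`, and the condition on `(p_0, …, p_N)` implies the
two-factor condition `1/p₀ ≤ 1/p_0 + 1/ρ - max(1, 1/p_0, 1/ρ)`.
For two factors with `p ≤ q` there are two regimes. If `p ≤ 1`, the condition says `q ≤ p₀`, and
`‖f * g‖_q ≤ ‖f‖_{min(q,1)} ‖g‖_q ≤ ‖f‖_p ‖g‖_q`: for `q ≤ 1` by the `q`-triangle inequality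
`(∑ x_j)^q ≤ ∑ x_j^q`, for `q ≥ 1` by Young's inequality with exponents `1, q, q`. If `p > 1`, it
is the classical Young inequality into `ℓ^R`, `1/R = 1/p + 1/q - 1`, followed by `ℓ^R ⊆ ℓ^{p₀}`.
-/

namespace Young

open ENNReal

variable {α : Type*}

/-- `lqnorm` with values in `ℝ≥0∞`, where infinite sums need no summability bookkeeping. -/
noncomputable def elqnorm (p : ℝ≥0∞) (h : α → ℝ≥0∞) : ℝ≥0∞ :=
  if p = ∞ then ⨆ j, h j else (∑' j, h j ^ p.toReal) ^ (1 / p.toReal)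

theorem elqnorm_top (h : α → ℝ≥0∞) : elqnorm ∞ h = ⨆ j, h j := if_pos rfl

theorem elqnorm_of_ne_top {p : ℝ≥0∞} (hp : p ≠ ∞) (h : α → ℝ≥0∞) :
    elqnorm p h = (∑' j, h j ^ p.toReal) ^ (1 / p.toReal) := if_neg hp

theorem elqnorm_one (h : α → ℝ≥0∞) : elqnorm 1 h = ∑' j, h j := by
  simp [elqnorm_of_ne_top]

theorem elqnorm_mono {p : ℝ≥0∞} {h h' : α → ℝ≥0∞} (hle : ∀ x, h x ≤ h' x) :
    elqnorm p h ≤ elqnorm p h' := by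
  unfold elqnorm
  split
  · exact iSup_mono hle
  · gcongr with x
    exact hle x

theorem tsum_rpow_one_div_le_of_le {t s : ℝ} (ht : 0 < t) (hts : t ≤ s) (h : α → ℝ≥0∞) :
    (∑' a, h a ^ s) ^ (1 / s) ≤ (∑' a, h a ^ t) ^ (1 / t) := by
  have hs : 0 < s := ht.trans_le hts
  set A := ∑' a, h a ^ t
  have hexp : 0 ≤ s / t - 1 := by rw [sub_nonneg, le_div_iff₀ ht]; simpa using hts
  have hsplit : ∀ x : ℝ≥0∞, x ^ s = x ^ t * (x ^ t) ^ (s / t - 1) := fun x => by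
    rw [← rpow_mul, ← rpow_add_of_nonneg _ _ ht.le (by positivity)]
    congr 1; field_simp; ring
  have hsum : ∑' a, h a ^ s ≤ A ^ (s / t) := calc
    ∑' a, h a ^ s ≤ ∑' a, h a ^ t * A ^ (s / t - 1) := by
        gcongr with a
        rw [hsplit]
        gcongr
        exact ENNReal.le_tsum a
    _ = A ^ (1 + (s / t - 1)) := by
      rw [ENNReal.tsum_mul_right, rpow_add_of_nonneg _ _ zero_le_one hexp, rpow_one]
    _ = A ^ (s / t) := by ring_nf
  calc (∑' a, h a ^ s) ^ (1 / s) ≤ (A ^ (s / t)) ^ (1 / s) := by gcongr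
    _ = A ^ (1 / t) := by rw [← rpow_mul]; congr 1; field_simp

theorem rpow_tsum_le_tsum_rpow {m : ℝ} (hm0 : 0 < m) (hm1 : m ≤ 1) (h : α → ℝ≥0∞) :
    (∑' a, h a) ^ m ≤ ∑' a, h a ^ m := by
  have key := tsum_rpow_one_div_le_of_le one_pos (one_le_one_div hm0 hm1) (fun a => h a ^ m)
  simpa [← rpow_mul, hm0.ne'] using key

theorem le_of_toReal_inv_le {x y : ℝ≥0∞} (hx : 0 < x) (hy : 0 < y)
    (h : y⁻¹.toReal ≤ x⁻¹.toReal) : x ≤ y :=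
  ENNReal.inv_le_inv.1 ((toReal_le_toReal (inv_ne_top.2 hy.ne') (inv_ne_top.2 hx.ne')).1 h)

theorem elqnorm_le_of_exponent_le {p q : ℝ≥0∞} (hp : 0 < p) (hpq : p ≤ q) (h : α → ℝ≥0∞) :
    elqnorm q h ≤ elqnorm p h := by
  rcases eq_or_ne p ∞ with rfl | hp_top
  · rw [top_le_iff.mp hpq]
  have ht : 0 < p.toReal := toReal_pos hp.ne' hp_top
  rw [elqnorm_of_ne_top hp_top]
  rcases eq_or_ne q ∞ with rfl | hq_top
  · rw [elqnorm_top]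
    refine iSup_le fun a => ?_
    calc h a = (h a ^ p.toReal) ^ (1 / p.toReal) := by
          rw [← rpow_mul, mul_one_div_cancel ht.ne', rpow_one]
      _ ≤ (∑' b, h b ^ p.toReal) ^ (1 / p.toReal) := by gcongr; exact ENNReal.le_tsum a
  · rw [elqnorm_of_ne_top hq_top]
    exact tsum_rpow_one_div_le_of_le ht (toReal_mono hq_top hpq) h

theorem tsum_prod_rpow_le {ι : Type*} (s : Finset ι) (F : ι → α → ℝ≥0∞) {e : ι → ℝ}
    (he : ∑ i ∈ s, e i = 1) (he0 : ∀ i ∈ s, 0 ≤ e i) :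
    ∑' a, ∏ i ∈ s, F i a ^ e i ≤ ∏ i ∈ s, (∑' a, F i a) ^ e i := by
  let _ : MeasurableSpace α := ⊤
  have : MeasurableSingletonClass α := ⟨fun _ => trivial⟩
  simpa only [MeasureTheory.lintegral_count] using
    ENNReal.lintegral_prod_norm_pow_le (μ := MeasureTheory.Measure.count) s
      (f := F) (fun i _ => measurable_from_top.aemeasurable) he he0

section Convolution

variable {G : Type*} [AddCommGroup G]

noncomputable def econv (f g : G → ℝ≥0∞) (k : G) : ℝ≥0∞ := ∑' j, f j * g (k - j)

theorem econv_comm (f g : G → ℝ≥0∞) : econv f g = econv g f := by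
  funext k
  simpa [econv, mul_comm] using ((Equiv.subLeft k).tsum_eq fun j => f j * g (k - j)).symm

theorem tsum_econv (f g : G → ℝ≥0∞) : ∑' k, econv f g k = (∑' j, f j) * ∑' j, g j := by
  simp only [econv]
  rw [ENNReal.tsum_comm, ← ENNReal.tsum_mul_right]
  refine tsum_congr fun j => ?_
  rw [ENNReal.tsum_mul_left]
  exact congrArg _ ((Equiv.subRight j).tsum_eq g)

theorem elqnorm_econv_le_of_le_one {s : ℝ≥0∞} (hs0 : 0 < s) (hs1 : s ≤ 1) (f g : G → ℝ≥0∞) :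
    elqnorm s (econv f g) ≤ elqnorm s f * elqnorm s g := by
  have hs_top : s ≠ ∞ := ne_top_of_le_ne_top one_ne_top hs1
  set t := s.toReal
  have ht0 : 0 < t := toReal_pos hs0.ne' hs_top
  have ht1 : t ≤ 1 := by simpa using toReal_mono one_ne_top hs1
  simp only [elqnorm_of_ne_top hs_top]
  rw [← mul_rpow_of_nonneg _ _ (by positivity), ← tsum_econv]
  gcongr with k
  calc econv f g k ^ t ≤ ∑' j, (f j * g (k - j)) ^ t := rpow_tsum_le_tsum_rpow ht0 ht1 _
    _ = econv (fun j => f j ^ t) (fun j => g j ^ t) k := by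
      simp only [econv, mul_rpow_of_nonneg _ _ ht0.le]

theorem elqnorm_top_econv_le (f g : G → ℝ≥0∞) :
    elqnorm ∞ (econv f g) ≤ elqnorm 1 f * elqnorm ∞ g := by
  rw [elqnorm_top, elqnorm_top, elqnorm_one, ← ENNReal.tsum_mul_right]
  exact iSup_le fun k => ENNReal.tsum_le_tsum fun j => by gcongr; exact le_iSup g (k - j)

theorem mul_eq_young_factors {P Q θ : ℝ} (hP : 0 < P) (hQ : 0 < Q) (hθ : 0 ≤ θ)
    (hθP : θ ≤ P⁻¹) (hθQ : θ ≤ Q⁻¹) (x y : ℝ≥0∞) :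
    x * y = (x ^ P * y ^ Q) ^ θ * (x ^ P) ^ (P⁻¹ - θ) * (y ^ Q) ^ (Q⁻¹ - θ) := by
  have split : ∀ {z : ℝ≥0∞} {S : ℝ}, 0 < S → θ ≤ S⁻¹ →
      z = z ^ (S * θ) * z ^ (S * (S⁻¹ - θ)) := fun {z S} hS hθS => by
    rw [← rpow_add_of_nonneg _ _ (by positivity) (mul_nonneg hS.le (sub_nonneg.2 hθS)),
      show S * θ + S * (S⁻¹ - θ) = 1 by field_simp; ring, rpow_one]
  rw [mul_rpow_of_nonneg _ _ hθ]
  simp only [← rpow_mul]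
  nth_rewrite 1 [split (z := x) hP hθP, split (z := y) hQ hθQ]
  ring

theorem econv_le_young {P Q θ : ℝ} (hP : 1 ≤ P) (hQ : 1 ≤ Q) (hθ : 0 ≤ θ)
    (hPQ : P⁻¹ + Q⁻¹ = 1 + θ) (f g : G → ℝ≥0∞) (k : G) :
    econv f g k ≤ (∑' j, f j ^ P * g (k - j) ^ Q) ^ θ * (∑' j, f j ^ P) ^ (P⁻¹ - θ) *
      (∑' j, g j ^ Q) ^ (Q⁻¹ - θ) := by
  have hP1 : P⁻¹ ≤ 1 := inv_le_one_of_one_le₀ hP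
  have hQ1 : Q⁻¹ ≤ 1 := inv_le_one_of_one_le₀ hQ
  have holder := tsum_prod_rpow_le Finset.univ
    ![fun j => f j ^ P * g (k - j) ^ Q, fun j => f j ^ P, fun j => g (k - j) ^ Q]
    (e := ![θ, P⁻¹ - θ, Q⁻¹ - θ]) (by simp [Fin.sum_univ_three]; linarith)
    (by intro i _; fin_cases i <;> simp <;> linarith)
  simp only [Fin.prod_univ_three, Matrix.cons_val] at holder
  rw [← (Equiv.subLeft k).tsum_eq fun j => g j ^ Q]
  refine le_of_eq_of_le (tsum_congr fun j => ?_) holder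
  exact mul_eq_young_factors (by linarith) (by linarith) hθ (by linarith) (by linarith) _ _

theorem elqnorm_econv_le_young {P Q R : ℝ≥0∞} (hP : 1 ≤ P) (hQ : 1 ≤ Q) (hP_top : P ≠ ∞)
    (hQ_top : Q ≠ ∞) (hR : 0 < R) (hPQR : P⁻¹.toReal + Q⁻¹.toReal = 1 + R⁻¹.toReal)
    (f g : G → ℝ≥0∞) : elqnorm R (econv f g) ≤ elqnorm P f * elqnorm Q g := by
  have hP' : 1 ≤ P.toReal := by simpa using toReal_mono hP_top hP
  have hQ' : 1 ≤ Q.toReal := by simpa using toReal_mono hQ_top hQ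
  simp only [toReal_inv] at hPQR
  have hpt := econv_le_young hP' hQ' (by positivity) hPQR f g
  rw [elqnorm_of_ne_top hP_top, elqnorm_of_ne_top hQ_top]
  set A := ∑' j, f j ^ P.toReal
  set B := ∑' j, g j ^ Q.toReal
  rcases eq_or_ne R ∞ with rfl | hR_top
  · simp only [toReal_top, _root_.inv_zero, rpow_zero, one_mul, sub_zero] at hpt
    rw [elqnorm_top, one_div, one_div]
    exact iSup_le hpt
  set R' := R.toReal
  have hR' : 0 < R' := toReal_pos hR.ne' hR_top
  have hα : 0 ≤ (P.toReal⁻¹ - R'⁻¹) * R' := by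
    have := inv_le_one_of_one_le₀ hQ'; nlinarith
  have hβ : 0 ≤ (Q.toReal⁻¹ - R'⁻¹) * R' := by
    have := inv_le_one_of_one_le₀ hP'; nlinarith
  have mul_rpow_self : ∀ (x : ℝ≥0∞) {a : ℝ}, 0 ≤ a → x * x ^ a = x ^ (1 + a) := fun x a ha => by
    rw [rpow_add_of_nonneg _ _ zero_le_one ha, rpow_one]
  rw [elqnorm_of_ne_top hR_top]
  calc (∑' k, econv f g k ^ R') ^ (1 / R')
      ≤ (∑' k, ((∑' j, f j ^ P.toReal * g (k - j) ^ Q.toReal) ^ R'⁻¹ * A ^ (P.toReal⁻¹ - R'⁻¹) *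
          B ^ (Q.toReal⁻¹ - R'⁻¹)) ^ R') ^ (1 / R') := by gcongr with k; exact hpt k
    _ = ((∑' k, econv (fun j => f j ^ P.toReal) (fun j => g j ^ Q.toReal) k) *
          (A ^ ((P.toReal⁻¹ - R'⁻¹) * R') * B ^ ((Q.toReal⁻¹ - R'⁻¹) * R'))) ^ (1 / R') := by
      simp only [mul_rpow_of_nonneg _ _ hR'.le, ← rpow_mul, inv_mul_cancel₀ hR'.ne', rpow_one,
        mul_assoc, ENNReal.tsum_mul_right]
      rfl
    _ = A ^ (1 / P.toReal) * B ^ (1 / Q.toReal) := by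
      rw [tsum_econv, mul_mul_mul_comm, mul_rpow_self _ hα, mul_rpow_self _ hβ,
        mul_rpow_of_nonneg _ _ (by positivity), ← rpow_mul, ← rpow_mul]
      congr 2 <;> field_simp <;> ring

theorem elqnorm_econv_le {p q r : ℝ≥0∞} (hp : 0 < p) (hq : 0 < q) (hr : 0 < r)
    (h : r⁻¹.toReal ≤ p⁻¹.toReal + q⁻¹.toReal - max (max 1 p⁻¹.toReal) (max 1 q⁻¹.toReal))
    (f g : G → ℝ≥0∞) : elqnorm r (econv f g) ≤ elqnorm p f * elqnorm q g := by
  wlog hqp : q⁻¹.toReal ≤ p⁻¹.toReal generalizing p q f g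
  · rw [econv_comm f g, mul_comm]
    exact this hq hp (by rwa [add_comm, max_comm]) g f (le_of_not_ge hqp)
  rw [max_eq_left (max_le_max le_rfl hqp)] at h
  rcases le_or_gt 1 p⁻¹.toReal with ha | ha
  · rw [max_eq_right ha] at h
    have hp1 : p ≤ 1 := le_of_toReal_inv_le hp one_pos (by simpa using ha)
    have hqr : q ≤ r := le_of_toReal_inv_le hq hr (by linarith)
    refine (elqnorm_le_of_exponent_le hq hqr _).trans ?_
    rcases le_total 1 q⁻¹.toReal with hb | hb
    · have hq1 : q ≤ 1 := le_of_toReal_inv_le hq one_pos (by simpa using hb)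
      calc _ ≤ elqnorm q f * elqnorm q g := elqnorm_econv_le_of_le_one hq hq1 f g
        _ ≤ _ := by gcongr; exact elqnorm_le_of_exponent_le hp (le_of_toReal_inv_le hp hq hqp) f
    · have hq1 : 1 ≤ q := le_of_toReal_inv_le one_pos hq (by simpa using hb)
      calc _ ≤ elqnorm 1 f * elqnorm q g := ?_
        _ ≤ _ := by gcongr; exact elqnorm_le_of_exponent_le hp hp1 f
      rcases eq_or_ne q ∞ with rfl | hq_top
      · exact elqnorm_top_econv_le f g
      · exact elqnorm_econv_le_young le_rfl hq1 one_ne_top hq_top hq (by simp) f g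
  · rw [max_eq_left ha.le] at h
    have hθ : 0 ≤ p⁻¹.toReal + q⁻¹.toReal - 1 := toReal_nonneg.trans h
    set R := (ENNReal.ofReal (p⁻¹.toReal + q⁻¹.toReal - 1))⁻¹
    have hR : 0 < R := ENNReal.inv_pos.2 ofReal_ne_top
    have hR_inv : R⁻¹.toReal = p⁻¹.toReal + q⁻¹.toReal - 1 := by
      simp only [R, inv_inv, toReal_ofReal hθ]
    have hq_top : q ≠ ∞ := by rintro rfl; simp only [inv_top, toReal_zero] at hθ; linarith
    have hp_top : p ≠ ∞ := by rintro rfl; simp only [inv_top, toReal_zero] at hqp ha hθ; linarith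
    have hp1 : 1 ≤ p := le_of_toReal_inv_le one_pos hp (by simpa using ha.le)
    have hq1 : 1 ≤ q := le_of_toReal_inv_le one_pos hq (by simpa using hqp.trans ha.le)
    calc elqnorm r (econv f g)
        ≤ elqnorm R (econv f g) :=
          elqnorm_le_of_exponent_le hR (le_of_toReal_inv_le hR hr (hR_inv ▸ h)) _
      _ ≤ _ := elqnorm_econv_le_young hp1 hq1 hp_top hq_top hR (by rw [hR_inv]; ring) f g

theorem enorm_nconv_succ_le (N : ℕ) (a : Fin (N + 2) → G → ℂ) (k : G) :
    ‖nconv (N + 1) a k‖ₑ ≤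
      econv (fun j => ‖a 0 j‖ₑ) (fun j => ‖nconv N (fun i => a i.succ) j‖ₑ) k :=
  enorm_tsum_le_tsum_enorm.trans_eq (by simp only [enorm_mul]; rfl)

end Convolution

/-- The largest admissible `1/p₀`, namely `∑ 1/p_j - R_N(p)`, in terms of `x j = 1/p_j`. -/
noncomputable def youngExponent {n : ℕ} (x : Fin n → ℝ) : ℝ :=
  ∑ j, x j - (∑ j, max 1 (x j) - ⨅ j, max 1 (x j))

theorem youngExponent_fin_one (x : Fin 1 → ℝ) : youngExponent x = x 0 := by
  simp [youngExponent]

theorem youngExponent_le_succ {n : ℕ} (x : Fin (n + 2) → ℝ) :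
    youngExponent x ≤ x 0 + youngExponent (Fin.tail x) -
      max (max 1 (x 0)) (max 1 (youngExponent (Fin.tail x))) := by
  simp only [youngExponent, Fin.tail, Fin.sum_univ_succ (f := x),
    Fin.sum_univ_succ (f := fun j => max 1 (x j))]
  set i := ⨅ j : Fin (n + 1), max 1 (x j.succ)
  have hinf_le_zero : ⨅ j, max 1 (x j) ≤ max 1 (x 0) := ciInf_le (Finite.bddBelow_range _) 0
  have hinf_le_tail : ⨅ j, max 1 (x j) ≤ i :=
    le_ciInf fun j => ciInf_le (Finite.bddBelow_range _) j.succ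
  have hi : 1 ≤ i := le_ciInf fun j => le_max_left _ _
  have hsum : ∑ j : Fin (n + 1), x j.succ ≤ ∑ j : Fin (n + 1), max 1 (x j.succ) :=
    Finset.sum_le_sum fun j _ => le_max_right _ _
  have hmax := max_le_max (le_refl (max 1 (x 0)))
    (max_le hi (show ∑ j : Fin (n + 1), x j.succ - (∑ j : Fin (n + 1), max 1 (x j.succ) - i) ≤ i
      by linarith))
  rcases le_total (max 1 (x 0)) i with h | h
  · rw [max_eq_right h] at hmax; linarith
  · rw [max_eq_left h] at hmax; linarith

theorem toReal_inv_le_youngExponent {N : ℕ} {p : Fin (N + 1) → ℝ≥0∞} {p₀ : ℝ≥0∞}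
    (hp : ∀ j, 0 < p j)
    (h : 1 / p₀ + ∑ j, max 1 (1 / p j) ≤ (∑ j, 1 / p j) + ⨅ j, max 1 (1 / p j)) :
    p₀⁻¹.toReal ≤ youngExponent fun j => (p j)⁻¹.toReal := by
  have hfin : ∀ j, (p j)⁻¹ ≠ ∞ := fun j => inv_ne_top.2 (hp j).ne'
  have hmax_fin : ∀ j, max 1 (p j)⁻¹ ≠ ∞ := fun j => max_ne_top one_ne_top (hfin j)
  simp only [one_div] at h
  have hRHS : ∑ j, (p j)⁻¹ + ⨅ j, max 1 (p j)⁻¹ ≠ ∞ :=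
    add_ne_top.2 ⟨sum_ne_top.2 fun j _ => hfin j, ne_top_of_le_ne_top (hmax_fin 0) (iInf_le _ 0)⟩
  have hLHS := ne_top_of_le_ne_top hRHS h
  have := toReal_mono hRHS h
  rw [toReal_add (add_ne_top.1 hLHS).1 (add_ne_top.1 hLHS).2,
    toReal_add (add_ne_top.1 hRHS).1 (add_ne_top.1 hRHS).2, toReal_sum fun j _ => hmax_fin j,
    toReal_sum fun j _ => hfin j, toReal_iInf hmax_fin] at this
  simp only [toReal_max one_ne_top (hfin _), toReal_one] at this
  unfold youngExponent
  linarith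

theorem elqnorm_nconv_le {G : Type*} [AddCommGroup G] :
    ∀ (N : ℕ) (p : Fin (N + 1) → ℝ≥0∞) (r : ℝ≥0∞), (∀ j, 0 < p j) → 0 < r →
      r⁻¹.toReal ≤ youngExponent (fun j => (p j)⁻¹.toReal) →
      ∀ a : Fin (N + 1) → G → ℂ,
        elqnorm r (fun k => ‖nconv N a k‖ₑ) ≤ ∏ j, elqnorm (p j) (fun k => ‖a j k‖ₑ)
  | 0, p, r, hp, hr, h, a => by
    rw [youngExponent_fin_one] at h
    rw [Fin.prod_univ_one]
    exact elqnorm_le_of_exponent_le (hp 0) (le_of_toReal_inv_le (hp 0) hr h) _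
  | N + 1, p, r, hp, hr, h, a => by
    have hstep := youngExponent_le_succ fun j => (p j)⁻¹.toReal
    set y := youngExponent (Fin.tail fun j => (p j)⁻¹.toReal)
    have hy : 0 ≤ y := by
      linarith [le_max_left (max 1 (p 0)⁻¹.toReal) (max 1 y), le_max_right 1 (p 0)⁻¹.toReal,
        (r⁻¹).toReal_nonneg]
    set ρ := (ENNReal.ofReal y)⁻¹
    have hρ : 0 < ρ := ENNReal.inv_pos.2 ofReal_ne_top
    have hρ_inv : ρ⁻¹.toReal = y := by simp only [ρ, inv_inv, toReal_ofReal hy]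
    calc elqnorm r (fun k => ‖nconv (N + 1) a k‖ₑ)
        ≤ elqnorm r (econv (fun j => ‖a 0 j‖ₑ) (fun j => ‖nconv N (fun i => a i.succ) j‖ₑ)) :=
          elqnorm_mono (enorm_nconv_succ_le N a)
      _ ≤ elqnorm (p 0) (fun k => ‖a 0 k‖ₑ) *
            elqnorm ρ (fun j => ‖nconv N (fun i => a i.succ) j‖ₑ) :=
          elqnorm_econv_le (hp 0) hρ hr (by rw [hρ_inv]; linarith) _ _
      _ ≤ elqnorm (p 0) (fun k => ‖a 0 k‖ₑ) *
            ∏ j : Fin (N + 1), elqnorm (p j.succ) (fun k => ‖a j.succ k‖ₑ) := by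
          gcongr
          exact elqnorm_nconv_le N _ ρ (fun j => hp j.succ) hρ hρ_inv.le _
      _ = ∏ j, elqnorm (p j) (fun k => ‖a j k‖ₑ) := by
          rw [Fin.prod_univ_succ (n := N + 1)]

theorem memℓp_iff_elqnorm_ne_top {E : Type*} [NormedAddCommGroup E] {p : ℝ≥0∞} (hp : 0 < p)
    (f : α → E) : Memℓp f p ↔ elqnorm p (fun i => ‖f i‖ₑ) ≠ ∞ := by
  rcases eq_or_ne p ∞ with rfl | hp_top
  · rw [memℓp_infty_iff, elqnorm_top, ← lt_top_iff_ne_top]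
    simp only [enorm_eq_nnnorm, ENNReal.iSup_coe_lt_top, ← NNReal.bddAbove_coe, ← Set.range_comp]
    rfl
  · have ht : 0 < p.toReal := toReal_pos hp.ne' hp_top
    rw [memℓp_gen_iff ht, elqnorm_of_ne_top hp_top, Ne, rpow_eq_top_iff_of_pos (by positivity),
      ← Ne]
    simp only [enorm_eq_nnnorm, ← coe_rpow_of_nonneg _ ht.le, tsum_coe_ne_top_iff_summable,
      ← NNReal.summable_coe, NNReal.coe_rpow, coe_nnnorm]

theorem lqnorm_eq_toReal_elqnorm {p : ℝ≥0∞} (f : α → ℂ) :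
    lqnorm p f = (elqnorm p (fun i => ‖f i‖ₑ)).toReal := by
  rcases eq_or_ne p ∞ with rfl | hp_top
  · rw [lqnorm, if_pos rfl, elqnorm_top, toReal_iSup (fun _ => enorm_ne_top)]
    simp
  · rw [lqnorm, if_neg hp_top, elqnorm_of_ne_top hp_top, ← toReal_rpow, tsum_toReal_eq]
    · simp [← toReal_rpow]
    · exact fun i => rpow_ne_top_of_nonneg toReal_nonneg enorm_ne_top

end Young

theorem young_nfold_quasi_general {d : ℕ} (Λ : AddSubgroup (Fin d → ℝ))
    (N : ℕ) (p : Fin (N + 1) → ℝ≥0∞) (p₀ : ℝ≥0∞)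
    (hp : ∀ j, 0 < p j) (hp₀ : 0 < p₀)
    (hyoung : 1 / p₀ + ∑ j, max 1 (1 / p j)
        ≤ (∑ j, 1 / p j) + ⨅ j, max 1 (1 / p j))
    (a : Fin (N + 1) → (↥Λ → ℂ))
    (ha : ∀ j, Memℓp (a j) (p j)) :
    Memℓp (nconv N a) p₀ ∧
      lqnorm p₀ (nconv N a) ≤ ∏ j, lqnorm (p j) (a j) := by
  open Young ENNReal in
  have hbound := elqnorm_nconv_le N p p₀ hp hp₀ (toReal_inv_le_youngExponent hp hyoung) a
  have hfin : ∏ j, elqnorm (p j) (fun k => ‖a j k‖ₑ) ≠ ∞ :=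
    prod_ne_top fun j _ => (memℓp_iff_elqnorm_ne_top (hp j) (a j)).1 (ha j)
  refine ⟨(memℓp_iff_elqnorm_ne_top hp₀ _).2 (ne_top_of_le_ne_top hfin hbound), ?_⟩
  simpa only [lqnorm_eq_toReal_elqnorm, toReal_prod] using toReal_mono hfin hbound

/-- `N`-fold Young inequality on a lattice for quasi-Banach exponents.
The hypothesis `1/p₀ ≤ ∑ 1/p_j − R_N(p₁,…,p_N)`, with
`R_N = (∑ max(1, 1/p_j)) − min_j max(1, 1/p_j)`, is stated additively in `ℝ≥0∞`. -/
theorem young_nfold_quasi {d : ℕ} (Λ : AddSubgroup (Fin d → ℝ))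
    [DiscreteTopology Λ] (N : ℕ) (p : Fin (N + 1) → ℝ≥0∞) (p₀ : ℝ≥0∞)
    (hp : ∀ j, 0 < p j) (hp₀ : 0 < p₀)
    (hyoung : 1 / p₀ + ∑ j, max 1 (1 / p j)
        ≤ (∑ j, 1 / p j) + ⨅ j, max 1 (1 / p j))
    (a : Fin (N + 1) → (↥Λ → ℂ))
    (ha : ∀ j, Memℓp (a j) (p j)) :
    Memℓp (nconv N a) p₀ ∧
      lqnorm p₀ (nconv N a) ≤ ∏ j, lqnorm (p j) (a j) :=
  young_nfold_quasi_general Λ N p p₀ hp hp₀ hyoung a ha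
end

section
/- Let Λ be a lattice in ℝ^d, p₁, p₂ ∈ (0,∞] with p₂ ≤ p₁ and p₂ < 1. Then for all a ∈ ℓ^{p₁}(Λ) and b ∈ ℓ^{p₂}(Λ), the convolution a*b belongs to ℓ^{p₁}(Λ) and ‖a*b‖_{ℓ^{p₁}} ≤ ‖a‖_{ℓ^{p₁}} ‖b‖_{ℓ^{p₂}}. -/
open scoped BigOperators ENNReal

/-- Convolution of sequences on a discrete additive group. -/
noncomputable def dconv {G : Type*} [AddCommGroup G] (a b : G → ℂ) : G → ℂ :=
  fun k => ∑' j, a j * b (k - j)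

/-!
Since the `ℓ^q` quasi-norms decrease in `q` and `p₂ ≤ min 1 p₁`, both `‖b‖_{ℓ^1}` and
`‖b‖_{ℓ^{p₁}}` are at most `‖b‖_{ℓ^{p₂}}`. For `p₁ ≤ 1`, the `p₁`-triangle inequality
`(∑ xⱼ)^{p₁} ≤ ∑ xⱼ^{p₁}` gives `‖a * b‖_{p₁}^{p₁} ≤ ‖a‖_{p₁}^{p₁} ‖b‖_{p₁}^{p₁}`.
For `1 ≤ p₁ < ∞`, Hölder's inequality with weights `|b (k - j)|` gives
`‖a * b‖_{p₁} ≤ ‖a‖_{p₁} ‖b‖_{ℓ^1}`, and for `p₁ = ∞` this bound is immediate.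
All estimates are made for `ℝ≥0∞`-valued sums, so summability is only checked at the end.
-/

section TsumRpow

variable {ι : Type*}

noncomputable def lpENorm (p : ℝ) (f : ι → ℝ≥0∞) : ℝ≥0∞ :=
  (∑' i, f i ^ p) ^ (1 / p)

lemma lpENorm_rpow {p : ℝ} (hp : p ≠ 0) (f : ι → ℝ≥0∞) :
    lpENorm p f ^ p = ∑' i, f i ^ p := by
  rw [lpENorm, ← ENNReal.rpow_mul, one_div_mul_cancel hp, ENNReal.rpow_one]

lemma lpENorm_ne_top_iff {p : ℝ} (hp : 0 < p) (f : ι → ℝ≥0∞) :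
    lpENorm p f ≠ ∞ ↔ ∑' i, f i ^ p ≠ ∞ := by
  simp only [lpENorm, ne_eq, ← lt_top_iff_ne_top,
    ENNReal.rpow_lt_top_iff_of_pos (one_div_pos.2 hp)]

lemma lpENorm_mono {p : ℝ} (hp : 0 < p) {f g : ι → ℝ≥0∞} (hfg : f ≤ g) :
    lpENorm p f ≤ lpENorm p g := by
  unfold lpENorm
  gcongr with i
  exact hfg i

lemma le_lpENorm {p : ℝ} (hp : 0 < p) (f : ι → ℝ≥0∞) (i : ι) : f i ≤ lpENorm p f := by
  rw [← ENNReal.rpow_le_rpow_iff hp, lpENorm_rpow hp.ne']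
  exact ENNReal.le_tsum i

lemma tsum_rpow_le_lpENorm_rpow {p q : ℝ} (hq : 0 < q) (hqp : q ≤ p) (f : ι → ℝ≥0∞) :
    ∑' i, f i ^ p ≤ lpENorm q f ^ p := by
  have hpq : 0 ≤ p - q := sub_nonneg.2 hqp
  calc ∑' i, f i ^ p = ∑' i, f i ^ q * f i ^ (p - q) := by
        simp_rw [← ENNReal.rpow_add_of_nonneg _ _ hq.le hpq, add_sub_cancel]
    _ ≤ ∑' i, f i ^ q * lpENorm q f ^ (p - q) := by
        gcongr with i
        exact le_lpENorm hq f i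
    _ = lpENorm q f ^ q * lpENorm q f ^ (p - q) := by
        rw [ENNReal.tsum_mul_right, lpENorm_rpow hq.ne']
    _ = lpENorm q f ^ p := by
        rw [← ENNReal.rpow_add_of_nonneg _ _ hq.le hpq, add_sub_cancel]

lemma tsum_le_lpENorm {q : ℝ} (hq : 0 < q) (hq1 : q ≤ 1) (f : ι → ℝ≥0∞) :
    ∑' i, f i ≤ lpENorm q f := by
  simpa using tsum_rpow_le_lpENorm_rpow hq hq1 f

lemma rpow_tsum_le_tsum_rpow {p : ℝ} (hp : 0 < p) (hp1 : p ≤ 1) (f : ι → ℝ≥0∞) :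
    (∑' i, f i) ^ p ≤ ∑' i, f i ^ p := by
  rw [← lpENorm_rpow hp.ne']
  exact ENNReal.rpow_le_rpow (tsum_le_lpENorm hp hp1 f) hp.le

lemma ENNReal.inner_le_weight_mul_Lp_tsum {p : ℝ} (hp : 1 ≤ p) (w f : ι → ℝ≥0∞) :
    ∑' i, w i * f i ≤ (∑' i, w i) ^ (1 - p⁻¹) * (∑' i, w i * f i ^ p) ^ p⁻¹ := by
  rw [ENNReal.tsum_eq_iSup_sum]
  refine iSup_le fun s => (ENNReal.inner_le_weight_mul_Lp_of_nonneg s hp w f).trans ?_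
  gcongr
  · exact sub_nonneg.2 (inv_le_one_of_one_le₀ hp)
  · exact ENNReal.sum_le_tsum s
  · exact ENNReal.sum_le_tsum s

lemma ENNReal.rpow_tsum_mul_le {p : ℝ} (hp : 1 ≤ p) (w f : ι → ℝ≥0∞) :
    (∑' i, w i * f i) ^ p ≤ (∑' i, w i) ^ (p - 1) * ∑' i, w i * f i ^ p := by
  have hp₀ : 0 < p := zero_lt_one.trans_le hp
  calc (∑' i, w i * f i) ^ p
      ≤ ((∑' i, w i) ^ (1 - p⁻¹) * (∑' i, w i * f i ^ p) ^ p⁻¹) ^ p :=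
        ENNReal.rpow_le_rpow (ENNReal.inner_le_weight_mul_Lp_tsum hp w f) hp₀.le
    _ = (∑' i, w i) ^ (p - 1) * ∑' i, w i * f i ^ p := by
        rw [ENNReal.mul_rpow_of_nonneg _ _ hp₀.le, ← ENNReal.rpow_mul, ← ENNReal.rpow_mul,
          inv_mul_cancel₀ hp₀.ne', ENNReal.rpow_one, sub_mul, one_mul, inv_mul_cancel₀ hp₀.ne']

end TsumRpow

section Convolution

variable {G : Type*} [AddCommGroup G]

lemma ENNReal.tsum_tsum_mul_sub (f g : G → ℝ≥0∞) :
    ∑' k, ∑' j, f j * g (k - j) = (∑' j, f j) * ∑' j, g j := by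
  rw [ENNReal.tsum_comm, ← ENNReal.tsum_mul_right]
  refine tsum_congr fun j => ?_
  rw [ENNReal.tsum_mul_left]
  exact congrArg (f j * ·) ((Equiv.subRight j).tsum_eq g)

lemma tsum_conv_rpow_le_of_le_one {p : ℝ} (hp : 0 < p) (hp1 : p ≤ 1) (f g : G → ℝ≥0∞) :
    ∑' k, (∑' j, f j * g (k - j)) ^ p ≤ (∑' j, f j ^ p) * ∑' j, g j ^ p :=
  calc ∑' k, (∑' j, f j * g (k - j)) ^ p
      ≤ ∑' k, ∑' j, f j ^ p * g (k - j) ^ p := by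
        gcongr with k
        simpa only [ENNReal.mul_rpow_of_nonneg _ _ hp.le] using
          rpow_tsum_le_tsum_rpow hp hp1 fun j => f j * g (k - j)
    _ = (∑' j, f j ^ p) * ∑' j, g j ^ p :=
        ENNReal.tsum_tsum_mul_sub (f · ^ p) (g · ^ p)

lemma tsum_conv_rpow_le_of_one_le {p : ℝ} (hp : 1 ≤ p) (f g : G → ℝ≥0∞) :
    ∑' k, (∑' j, f j * g (k - j)) ^ p ≤ (∑' j, f j ^ p) * (∑' j, g j) ^ p := by
  have hsub (k : G) : ∑' j, g (k - j) = ∑' j, g j := (Equiv.subLeft k).tsum_eq g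
  calc ∑' k, (∑' j, f j * g (k - j)) ^ p
      ≤ ∑' k, (∑' j, g j) ^ (p - 1) * ∑' j, g (k - j) * f j ^ p := by
        gcongr with k
        simpa only [mul_comm (f _), hsub] using
          ENNReal.rpow_tsum_mul_le hp (fun j => g (k - j)) f
    _ = (∑' j, f j ^ p) * (∑' j, g j) ^ (p - 1) * ∑' j, g j := by
        simp_rw [ENNReal.tsum_mul_left, mul_comm (g _), ENNReal.tsum_tsum_mul_sub]
        ring
    _ = (∑' j, f j ^ p) * (∑' j, g j) ^ p := by
        nth_rw 2 [← ENNReal.rpow_one (∑' j, g j)]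
        rw [mul_assoc, ← ENNReal.rpow_add_of_nonneg _ _ (sub_nonneg.2 hp) zero_le_one,
          sub_add_cancel]

lemma lpENorm_conv_le {p q : ℝ} (hq : 0 < q) (hq1 : q ≤ 1)
    (hqp : q ≤ p) (f g : G → ℝ≥0∞) :
    lpENorm p (fun k => ∑' j, f j * g (k - j)) ≤ lpENorm p f * lpENorm q g := by
  have hp : 0 < p := hq.trans_le hqp
  rw [← ENNReal.rpow_le_rpow_iff hp, ENNReal.mul_rpow_of_nonneg _ _ hp.le, lpENorm_rpow hp.ne',
    lpENorm_rpow hp.ne']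
  rcases le_total p 1 with hp1 | hp1
  · calc _ ≤ (∑' j, f j ^ p) * ∑' j, g j ^ p := tsum_conv_rpow_le_of_le_one hp hp1 f g
      _ ≤ _ := by gcongr; exact tsum_rpow_le_lpENorm_rpow hq hqp g
  · calc _ ≤ (∑' j, f j ^ p) * (∑' j, g j) ^ p := tsum_conv_rpow_le_of_one_le hp1 f g
      _ ≤ _ := by gcongr; exact tsum_le_lpENorm hq hq1 g

end Convolution

section Sequences

variable {α : Type*} {E : Type*} [NormedAddCommGroup E]

lemma memℓp_iff_lpENorm_ne_top {p : ℝ≥0∞} (hp : 0 < p.toReal) (f : α → E) :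
    Memℓp f p ↔ lpENorm p.toReal (‖f ·‖ₑ) ≠ ∞ := by
  have hpow (i : α) : ‖f i‖ₑ ^ p.toReal = ENNReal.ofReal (‖f i‖ ^ p.toReal) := by
    rw [← ofReal_norm, ENNReal.ofReal_rpow_of_nonneg (norm_nonneg _) hp.le]
  simp only [memℓp_gen_iff hp, lpENorm_ne_top_iff hp, hpow]
  refine ⟨fun h => ?_, fun h => ?_⟩
  · rw [← ENNReal.ofReal_tsum_of_nonneg (fun i => by positivity) h]
    exact ENNReal.ofReal_ne_top
  · simpa only [ENNReal.toReal_ofReal (by positivity : 0 ≤ ‖f _‖ ^ p.toReal)] using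
      ENNReal.summable_toReal h

lemma lqnorm_eq_toReal_lpENorm {p : ℝ≥0∞} (hp : p ≠ ∞) (f : α → ℂ) :
    lqnorm p f = (lpENorm p.toReal (‖f ·‖ₑ)).toReal := by
  rw [lqnorm, if_neg hp, lpENorm, ← ENNReal.toReal_rpow, ENNReal.tsum_toReal_eq fun i =>
    ENNReal.rpow_ne_top_of_nonneg ENNReal.toReal_nonneg enorm_ne_top]
  simp only [← ENNReal.toReal_rpow, toReal_enorm]

end Sequences

section Young

variable {G : Type*} [AddCommGroup G]

lemma enorm_dconv_le (a b : G → ℂ) (k : G) :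
    ‖dconv a b k‖ₑ ≤ ∑' j, ‖a j‖ₑ * ‖b (k - j)‖ₑ := by
  simpa only [dconv, enorm_mul] using enorm_tsum_le_tsum_enorm (f := fun j => a j * b (k - j))

theorem memℓp_dconv_and_lqnorm_le_of_ne_top {p q : ℝ≥0∞} (hq : 0 < q) (hq1 : q ≤ 1)
    (hqp : q ≤ p) (hp : p ≠ ∞) {a b : G → ℂ} (ha : Memℓp a p) (hb : Memℓp b q) :
    Memℓp (dconv a b) p ∧ lqnorm p (dconv a b) ≤ lqnorm p a * lqnorm q b := by
  have hq' : q ≠ ∞ := ne_top_of_le_ne_top ENNReal.one_ne_top hq1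
  have hq0 : 0 < q.toReal := ENNReal.toReal_pos hq.ne' hq'
  have hq1' : q.toReal ≤ 1 :=
    (ENNReal.toReal_mono ENNReal.one_ne_top hq1).trans_eq ENNReal.toReal_one
  have hp0 : 0 < p.toReal := hq0.trans_le (ENNReal.toReal_mono hp hqp)
  have hconv : lpENorm p.toReal (‖dconv a b ·‖ₑ)
      ≤ lpENorm p.toReal (‖a ·‖ₑ) * lpENorm q.toReal (‖b ·‖ₑ) :=
    (lpENorm_mono hp0 (enorm_dconv_le a b)).trans <|
      lpENorm_conv_le hq0 hq1' (ENNReal.toReal_mono hp hqp) _ _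
  have hfin : lpENorm p.toReal (‖a ·‖ₑ) * lpENorm q.toReal (‖b ·‖ₑ) ≠ ∞ :=
    ENNReal.mul_ne_top ((memℓp_iff_lpENorm_ne_top hp0 a).1 ha)
      ((memℓp_iff_lpENorm_ne_top hq0 b).1 hb)
  refine ⟨(memℓp_iff_lpENorm_ne_top hp0 _).2 (ne_top_of_le_ne_top hfin hconv), ?_⟩
  rw [lqnorm_eq_toReal_lpENorm hp, lqnorm_eq_toReal_lpENorm hp, lqnorm_eq_toReal_lpENorm hq',
    ← ENNReal.toReal_mul]
  exact ENNReal.toReal_mono hfin hconv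

theorem memℓp_dconv_and_lqnorm_le_of_top {q : ℝ≥0∞} (hq : 0 < q) (hq1 : q ≤ 1)
    {a b : G → ℂ} (ha : Memℓp a ∞) (hb : Memℓp b q) :
    Memℓp (dconv a b) ∞ ∧ lqnorm ∞ (dconv a b) ≤ lqnorm ∞ a * lqnorm q b := by
  have hq' : q ≠ ∞ := ne_top_of_le_ne_top ENNReal.one_ne_top hq1
  have hq0 : 0 < q.toReal := ENNReal.toReal_pos hq.ne' hq'
  have hq1' : q.toReal ≤ 1 :=
    (ENNReal.toReal_mono ENNReal.one_ne_top hq1).trans_eq ENNReal.toReal_one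
  set A := ⨆ j, ‖a j‖
  have hA0 : 0 ≤ A := Real.iSup_nonneg fun j => norm_nonneg (a j)
  have hA (j : G) : ‖a j‖ₑ ≤ ENNReal.ofReal A := by
    rw [← ofReal_norm]
    exact ENNReal.ofReal_le_ofReal (le_ciSup (memℓp_infty_iff.1 ha) j)
  have hfin : ENNReal.ofReal A * lpENorm q.toReal (‖b ·‖ₑ) ≠ ∞ :=
    ENNReal.mul_ne_top ENNReal.ofReal_ne_top ((memℓp_iff_lpENorm_ne_top hq0 b).1 hb)
  have hbound (k : G) : ‖dconv a b k‖ ≤ A * lqnorm q b := by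
    have : ‖dconv a b k‖ₑ ≤ ENNReal.ofReal A * lpENorm q.toReal (‖b ·‖ₑ) :=
      calc ‖dconv a b k‖ₑ
          ≤ ∑' j, ‖a j‖ₑ * ‖b (k - j)‖ₑ := enorm_dconv_le a b k
        _ ≤ ∑' j, ENNReal.ofReal A * ‖b (k - j)‖ₑ := by gcongr with j; exact hA j
        _ = ENNReal.ofReal A * ∑' j, ‖b j‖ₑ := by
            rw [ENNReal.tsum_mul_left]
            exact congrArg _ ((Equiv.subLeft k).tsum_eq (‖b ·‖ₑ))
        _ ≤ _ := by gcongr; exact tsum_le_lpENorm hq0 hq1' _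
    rw [lqnorm_eq_toReal_lpENorm hq', ← toReal_enorm,
      ← ENNReal.toReal_ofReal hA0, ← ENNReal.toReal_mul]
    exact ENNReal.toReal_mono hfin this
  refine ⟨memℓp_infty ⟨_, Set.forall_mem_range.2 hbound⟩, ?_⟩
  rw [lqnorm, if_pos rfl, lqnorm, if_pos rfl]
  exact ciSup_le hbound

end Young

theorem young_two_factor_quasi_general {d : ℕ} (Λ : AddSubgroup (Fin d → ℝ))
    (p₁ p₂ : ℝ≥0∞)
    (hp₂pos : 0 < p₂) (hp₂₁ : p₂ ≤ p₁) (hp₂ : p₂ < 1)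
    (a b : ↥Λ → ℂ) (ha : Memℓp a p₁) (hb : Memℓp b p₂) :
    Memℓp (dconv a b) p₁ ∧
      lqnorm p₁ (dconv a b) ≤ lqnorm p₁ a * lqnorm p₂ b := by
  rcases eq_or_ne p₁ ∞ with rfl | hp₁
  · exact memℓp_dconv_and_lqnorm_le_of_top hp₂pos hp₂.le ha hb
  · exact memℓp_dconv_and_lqnorm_le_of_ne_top hp₂pos hp₂.le hp₂₁ hp₁ ha hb

/-- two-factor base case of the quasi-Banach Young inequality on a lattice. -/
theorem young_two_factor_quasi {d : ℕ} (Λ : AddSubgroup (Fin d → ℝ))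
    [DiscreteTopology Λ] (p₁ p₂ : ℝ≥0∞)
    (hp₂pos : 0 < p₂) (hp₂₁ : p₂ ≤ p₁) (hp₂ : p₂ < 1)
    (a b : ↥Λ → ℂ) (ha : Memℓp a p₁) (hb : Memℓp b p₂) :
    Memℓp (dconv a b) p₁ ∧
      lqnorm p₁ (dconv a b) ≤ lqnorm p₁ a * lqnorm p₂ b :=
  young_two_factor_quasi_general Λ p₁ p₂ hp₂pos hp₂₁ hp₂ a b ha hb
end
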